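/- arXiv:2103.15605 — 4 statements merged into one kernel-verified Lean document; each statement's English description precedes it below -/
import Mathlib

section
/- Let g ≥ 3 be an integer and θ ∈ (0, π/g). Set λ₁ = cot(θ) and λ_g = cot(θ + (g-1)π/g). Then 1 + λ₁·λ_g = -cot(π/g)·(1 + λ₁²)/(λ₁ - cot(π/g)) and this quantity is strictly negative. -/
/-!
Since `θ + (g - 1)π/g = (θ - π/g) + π` and `cot` has period `π`, the addition formula for
`cot (θ - π/g)` gives the identity. For the sign: `0 < π/g < π/2` makes `cot (π/g)` positive,
and `θ < π/g` makes `cot θ - cot (π/g) = sin (π/g - θ) / (sin θ sin (π/g))` positive.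
-/

open Real

namespace Real

theorem cot_add_pi (x : ℝ) : cot (x + π) = cot x := by
  rw [cot_eq_cos_div_sin, cot_eq_cos_div_sin, cos_add_pi, sin_add_pi, neg_div_neg_eq]

theorem cot_pos_of_mem_Ioo {x : ℝ} (hx : x ∈ Set.Ioo 0 (π / 2)) : 0 < cot x := by
  rw [cot_eq_cos_div_sin]
  exact div_pos (cos_pos_of_mem_Ioo ⟨by linarith [hx.1, pi_pos], hx.2⟩)
    (sin_pos_of_pos_of_lt_pi hx.1 (by linarith [hx.2, pi_pos]))

theorem cot_sub_cot {x y : ℝ} (hx : sin x ≠ 0) (hy : sin y ≠ 0) :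
    cot x - cot y = sin (y - x) / (sin x * sin y) := by
  rw [cot_eq_cos_div_sin, cot_eq_cos_div_sin, sin_sub]
  field_simp

theorem cot_lt_cot {x y : ℝ} (hx : 0 < x) (hxy : x < y) (hy : y < π) : cot y < cot x := by
  have hsx : 0 < sin x := sin_pos_of_pos_of_lt_pi hx (hxy.trans hy)
  have hsy : 0 < sin y := sin_pos_of_pos_of_lt_pi (hx.trans hxy) hy
  have hsyx : 0 < sin (y - x) := sin_pos_of_pos_of_lt_pi (by linarith) (by linarith)
  rw [← sub_pos, cot_sub_cot hsx.ne' hsy.ne']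
  positivity

theorem one_add_cot_mul_cot_sub {x y : ℝ} (hx : sin x ≠ 0) (hy : sin y ≠ 0)
    (hxy : sin (x - y) ≠ 0) :
    1 + cot x * cot (x - y) = -(cot y * (1 + cot x ^ 2)) / (cot x - cot y) := by
  have hden : cot x - cot y ≠ 0 := by
    rw [cot_sub_cot hx hy, ← neg_sub, sin_neg]
    exact div_ne_zero (neg_ne_zero.mpr hxy) (mul_ne_zero hx hy)
  rw [eq_div_iff hden]
  simp only [cot_eq_cos_div_sin, cos_sub, sin_sub] at hxy ⊢
  field_simp
  ring

end Real

theorem stmt0 (g : ℕ) (hg : 3 ≤ g) (θ : ℝ) (hθ : θ ∈ Set.Ioo 0 (π / g)) :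
    1 + Real.cot θ * Real.cot (θ + ((g : ℝ) - 1) * π / g)
        = -(Real.cot (π / g) * (1 + Real.cot θ ^ 2)) / (Real.cot θ - Real.cot (π / g)) ∧
      1 + Real.cot θ * Real.cot (θ + ((g : ℝ) - 1) * π / g) < 0 := by
  obtain ⟨hθ₀, hθb⟩ := hθ
  have hg₃ : (3 : ℝ) ≤ g := by exact_mod_cast hg
  have hb₀ : 0 < π / g := div_pos pi_pos (by linarith)
  have hb₂ : π / g < π / 2 := div_lt_div_of_pos_left pi_pos two_pos (by linarith)
  have hangle : θ + ((g : ℝ) - 1) * π / g = θ - π / g + π := by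
    field_simp
    ring
  have hsin_ne {x : ℝ} (hx₀ : 0 < x) (hxπ : x < π) : sin x ≠ 0 :=
    (sin_pos_of_pos_of_lt_pi hx₀ hxπ).ne'
  have hidentity := one_add_cot_mul_cot_sub (hsin_ne hθ₀ (by linarith))
    (hsin_ne hb₀ (by linarith)) (sin_neg_of_neg_of_neg_pi_lt (by linarith) (by linarith)).ne
  rw [hangle, cot_add_pi, hidentity]
  refine ⟨rfl, div_neg_of_neg_of_pos ?_ (sub_pos.mpr (cot_lt_cot hθ₀ hθb (by linarith)))⟩
  have := cot_pos_of_mem_Ioo ⟨hb₀, hb₂⟩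
  rw [neg_lt_zero]
  positivity
end

section
/- Let P₀,...,P_m (m ≥ 1) be a symmetric Clifford system on ℝ^{2l} given in standard block form by P₀(u,v) = (u,-v), P₁(u,v) = (v,u), P_{1+α}(u,v) = (E_α v, -E_α u) for skew-symmetric orthogonal anticommuting E_α. Suppose l > 2m. Then there exist a point z ∈ S^{2l-1} with ⟨P_i z, z⟩ = 0 for all i, and two orthonormal tangent vectors X, Y at z (i.e., ⟨X,z⟩ = ⟨Y,z⟩ = 0 and X, Y tangent to M₊) such that 1 + Σ_{α=0}^{m} ⟨P_α X, X⟩⟨P_α Y, Y⟩ - Σ_{α=0}^{m} ⟨P_α X, Y⟩² = -1. -/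
/-!
Choose unit vectors `a`, `b`, `c ∈ ℝ^l` with `b ⟂ a, E_α a` and `c ⟂ a, b, E_α a, E_α b`; this is
possible by dimension count as soon as `2m < l`. Then `z = (a, b)/√2` lies on `M₊` (the
`P_{1+α}` terms vanish because `E_α` is skew and `⟨E_α a, b⟩ = 0`), and `X = (c, 0)`,
`Y = (0, c)` are orthonormal and tangent to `M₊` at `z`. For this pair only `P₀` contributes to
`Σ ⟨P_α X, X⟩⟨P_α Y, Y⟩ = -1` and only `P₁` to `Σ ⟨P_α X, Y⟩² = 1`, since `⟨E_α c, c⟩ = 0`;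
hence the curvature term is `1 - 1 - 1 = -1`.
-/

open Matrix

/-- The symmetric Clifford system of OT-FKM type in standard block form, acting on
`ℝ^l ⊕ ℝ^l`: `P₀(u,v) = (u,-v)`, `P₁(u,v) = (v,u)`, `P_{1+α}(u,v) = (E_α v, -E_α u)`. -/
def cliffordP {l m : ℕ} (E : Fin (m - 1) → Matrix (Fin l) (Fin l) ℝ)
    (i : Fin (m + 1)) (z : (Fin l → ℝ) × (Fin l → ℝ)) : (Fin l → ℝ) × (Fin l → ℝ) :=
  if i.val = 0 then (z.1, -z.2)
  else if i.val = 1 then (z.2, z.1)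
  else if h : 2 ≤ i.val then
    ((E ⟨i.val - 2, by have := i.isLt; omega⟩).mulVec z.2,
      -((E ⟨i.val - 2, by have := i.isLt; omega⟩).mulVec z.1))
  else (0, 0)

/-- The inner product on `ℝ^l ⊕ ℝ^l`. -/
def pairDot {l : ℕ} (x y : (Fin l → ℝ) × (Fin l → ℝ)) : ℝ :=
  x.1 ⬝ᵥ y.1 + x.2 ⬝ᵥ y.2

section DotProduct

theorem exists_ne_zero_forall_dotProduct_eq_zero {K ι n : Type*} [Field K] [Fintype ι]
    [Fintype n] (h : Fintype.card ι < Fintype.card n) (v : ι → n → K) :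
    ∃ c ≠ 0, ∀ i, v i ⬝ᵥ c = 0 := by
  have hker : LinearMap.ker (Matrix.of v).mulVecLin ≠ ⊥ :=
    LinearMap.ker_ne_bot_of_finrank_lt (by simpa using h)
  obtain ⟨c, hc, hc0⟩ := Submodule.exists_mem_ne_zero_of_ne_bot hker
  exact ⟨c, hc0, fun i => congrFun (LinearMap.mem_ker.mp hc) i⟩

theorem exists_dotProduct_self_eq_one_forall_dotProduct_eq_zero {ι n : Type*} [Fintype ι]
    [Fintype n] (h : Fintype.card ι < Fintype.card n) (v : ι → n → ℝ) :
    ∃ c, c ⬝ᵥ c = 1 ∧ ∀ i, v i ⬝ᵥ c = 0 := by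
  obtain ⟨u, hu, hvu⟩ := exists_ne_zero_forall_dotProduct_eq_zero h v
  have hpos : 0 < u ⬝ᵥ u := by simpa using dotProduct_star_self_pos_iff.mpr hu
  refine ⟨(√(u ⬝ᵥ u))⁻¹ • u, ?_, fun i => by simp [hvu i]⟩
  rw [smul_dotProduct, dotProduct_smul, smul_eq_mul, smul_eq_mul, ← mul_assoc, ← mul_inv,
    Real.mul_self_sqrt hpos.le, inv_mul_cancel₀ hpos.ne']

variable {R n : Type*} [CommRing R] [Fintype n] {A : Matrix n n R}

theorem mulVec_dotProduct_of_transpose_eq_neg (hA : Aᵀ = -A) (x y : n → R) :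
    A *ᵥ x ⬝ᵥ y = -(A *ᵥ y ⬝ᵥ x) := by
  rw [dotProduct_comm, dotProduct_mulVec, ← mulVec_transpose, hA, neg_mulVec, neg_dotProduct]

theorem mulVec_dotProduct_self_of_transpose_eq_neg [NoZeroDivisors R] [CharZero R]
    (hA : Aᵀ = -A) (x : n → R) : A *ᵥ x ⬝ᵥ x = 0 :=
  CharZero.eq_neg_self_iff.mp (mulVec_dotProduct_of_transpose_eq_neg hA x x)

end DotProduct

theorem exists_frame_orthogonal_orbits {l k : ℕ} (E : Fin k → Matrix (Fin l) (Fin l) ℝ)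
    (hlk : 2 * (k + 1) < l) :
    ∃ a b c : Fin l → ℝ, a ⬝ᵥ a = 1 ∧ b ⬝ᵥ b = 1 ∧ c ⬝ᵥ c = 1 ∧
      a ⬝ᵥ b = 0 ∧ a ⬝ᵥ c = 0 ∧ b ⬝ᵥ c = 0 ∧
      (∀ α, E α *ᵥ a ⬝ᵥ b = 0) ∧ (∀ α, E α *ᵥ a ⬝ᵥ c = 0) ∧ (∀ α, E α *ᵥ b ⬝ᵥ c = 0) := by
  let orbit (x : Fin l → ℝ) (o : Option (Fin k)) : Fin l → ℝ := o.elim x (E · *ᵥ x)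
  let a : Fin l → ℝ := Pi.single ⟨0, by omega⟩ 1
  obtain ⟨b, hbb, hb⟩ :=
    exists_dotProduct_self_eq_one_forall_dotProduct_eq_zero (v := orbit a) (by simp; omega)
  obtain ⟨c, hcc, hc⟩ := exists_dotProduct_self_eq_one_forall_dotProduct_eq_zero
    (v := Sum.elim (orbit a) (orbit b)) (by simp; omega)
  exact ⟨a, b, c, by simp [a], hbb, hcc, hb none, hc (.inl none), hc (.inr none),
    fun α => hb (some α), fun α => hc (.inl (some α)), fun α => hc (.inr (some α))⟩

section CliffordSystem

variable {l m : ℕ} (E : Fin (m - 1) → Matrix (Fin l) (Fin l) ℝ)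

theorem cliffordP_cases {p : (Fin l → ℝ) × (Fin l → ℝ) → Prop} (z : (Fin l → ℝ) × (Fin l → ℝ))
    (h₀ : p (z.1, -z.2)) (h₁ : p (z.2, z.1)) (hE : ∀ α, p (E α *ᵥ z.2, -(E α *ᵥ z.1)))
    (i : Fin (m + 1)) : p (cliffordP E i z) := by
  unfold cliffordP
  split_ifs
  exacts [h₀, h₁, hE _, by omega]

theorem pairDot_cliffordP_inl_inl (c : Fin l → ℝ) (i : Fin (m + 1)) :
    pairDot (cliffordP E i (c, 0)) (c, 0) = if (i : ℕ) = 0 then c ⬝ᵥ c else 0 := by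
  unfold cliffordP
  split_ifs <;> simp [pairDot]

theorem pairDot_cliffordP_inr_inr (c : Fin l → ℝ) (i : Fin (m + 1)) :
    pairDot (cliffordP E i (0, c)) (0, c) = if (i : ℕ) = 0 then -(c ⬝ᵥ c) else 0 := by
  unfold cliffordP
  split_ifs <;> simp [pairDot]

theorem pairDot_cliffordP_inl_inr (hskew : ∀ α, (E α)ᵀ = -E α) (c : Fin l → ℝ)
    (i : Fin (m + 1)) :
    pairDot (cliffordP E i (c, 0)) (0, c) = if (i : ℕ) = 1 then c ⬝ᵥ c else 0 := by
  unfold cliffordP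
  split_ifs <;> simp_all [pairDot, mulVec_dotProduct_self_of_transpose_eq_neg]

theorem curvature_inl_inr_eq_neg_one (hm : 1 ≤ m) (hskew : ∀ α, (E α)ᵀ = -E α)
    {c : Fin l → ℝ} (hc : c ⬝ᵥ c = 1) :
    1 + (∑ α : Fin (m + 1),
        pairDot (cliffordP E α (c, 0)) (c, 0) * pairDot (cliffordP E α (0, c)) (0, c))
      - (∑ α : Fin (m + 1), (pairDot (cliffordP E α (c, 0)) (0, c)) ^ 2) = -1 := by
  have hsum (k : ℕ) (hk : k < m + 1) (a : ℝ) :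
      ∑ i : Fin (m + 1), (if (i : ℕ) = k then a else 0) = a := by
    rw [Fintype.sum_eq_single ⟨k, hk⟩ fun i hi => if_neg fun h => hi (Fin.ext h), if_pos rfl]
  simp only [pairDot_cliffordP_inl_inl, pairDot_cliffordP_inr_inr,
    pairDot_cliffordP_inl_inr E hskew, hc, ite_zero_mul_ite_zero, and_self, ite_pow, one_pow,
    ne_eq, OfNat.ofNat_ne_zero, not_false_eq_true, zero_pow]
  rw [hsum 0 (by omega), hsum 1 (by omega)]
  norm_num

theorem pairDot_cliffordP_self_eq_zero (hskew : ∀ α, (E α)ᵀ = -E α) {a b : Fin l → ℝ}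
    (hab : a ⬝ᵥ b = 0) (hnorm : a ⬝ᵥ a = b ⬝ᵥ b) (hE : ∀ α, E α *ᵥ a ⬝ᵥ b = 0)
    (i : Fin (m + 1)) : pairDot (cliffordP E i (a, b)) (a, b) = 0 := by
  refine cliffordP_cases E (p := fun w => pairDot w (a, b) = 0) (a, b) ?_ ?_ (fun α => ?_) i
  · simp [pairDot, hnorm]
  · simp [pairDot, dotProduct_comm b a, hab]
  · simp [pairDot, mulVec_dotProduct_of_transpose_eq_neg (hskew α) b a, hE]

theorem pairDot_cliffordP_inl_eq_zero {z : (Fin l → ℝ) × (Fin l → ℝ)} {c : Fin l → ℝ}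
    (h₁ : z.1 ⬝ᵥ c = 0) (h₂ : z.2 ⬝ᵥ c = 0) (hE : ∀ α, E α *ᵥ z.2 ⬝ᵥ c = 0)
    (i : Fin (m + 1)) : pairDot (cliffordP E i z) (c, 0) = 0 :=
  cliffordP_cases E (p := fun w => pairDot w (c, 0) = 0) z (by simp [pairDot, h₁])
    (by simp [pairDot, h₂]) (fun α => by simp [pairDot, hE]) i

theorem pairDot_cliffordP_inr_eq_zero {z : (Fin l → ℝ) × (Fin l → ℝ)} {c : Fin l → ℝ}
    (h₁ : z.1 ⬝ᵥ c = 0) (h₂ : z.2 ⬝ᵥ c = 0) (hE : ∀ α, E α *ᵥ z.1 ⬝ᵥ c = 0)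
    (i : Fin (m + 1)) : pairDot (cliffordP E i z) (0, c) = 0 :=
  cliffordP_cases E (p := fun w => pairDot w (0, c) = 0) z (by simp [pairDot, h₂])
    (by simp [pairDot, h₁]) (fun α => by simp [pairDot, hE]) i

end CliffordSystem

theorem stmt9_general (l m : ℕ) (hm : 1 ≤ m) (hlm : 2 * m < l)
    (E : Fin (m - 1) → Matrix (Fin l) (Fin l) ℝ)
    (hskew : ∀ α, (E α)ᵀ = -E α) :
    ∃ z X Y : (Fin l → ℝ) × (Fin l → ℝ),
      pairDot z z = 1 ∧ (∀ i, pairDot (cliffordP E i z) z = 0) ∧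
      pairDot X X = 1 ∧ pairDot Y Y = 1 ∧ pairDot X Y = 0 ∧
      pairDot X z = 0 ∧ pairDot Y z = 0 ∧
      (∀ i, pairDot (cliffordP E i z) X = 0) ∧
      (∀ i, pairDot (cliffordP E i z) Y = 0) ∧
      1 + (∑ α : Fin (m + 1), pairDot (cliffordP E α X) X * pairDot (cliffordP E α Y) Y)
        - (∑ α : Fin (m + 1), (pairDot (cliffordP E α X) Y) ^ 2) = -1 := by
  obtain ⟨a, b, c, haa, hbb, hcc, hab, hac, hbc, hEab, hEac, hEbc⟩ :=
    exists_frame_orthogonal_orbits E (by omega)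
  have hs : (√2)⁻¹ * (√2)⁻¹ = (1 / 2 : ℝ) := by
    rw [← mul_inv, Real.mul_self_sqrt zero_le_two, one_div]
  refine ⟨((√2)⁻¹ • a, (√2)⁻¹ • b), (c, 0), (0, c), ?_,
    pairDot_cliffordP_self_eq_zero E hskew ?_ ?_ fun α => ?_, by simp [pairDot, hcc],
    by simp [pairDot, hcc], by simp [pairDot], ?_, ?_,
    pairDot_cliffordP_inl_eq_zero E ?_ ?_ fun α => ?_,
    pairDot_cliffordP_inr_eq_zero E ?_ ?_ fun α => ?_,
    curvature_inl_inr_eq_neg_one E hm hskew hcc⟩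
  · simp only [pairDot, smul_dotProduct, dotProduct_smul, smul_eq_mul, haa, hbb]
    linarith
  all_goals simp [pairDot, mulVec_smul, dotProduct_comm c, hab, hac, hbc, haa, hbb, hEab, hEac,
    hEbc]

theorem stmt9 (l m : ℕ) (hm : 1 ≤ m) (hlm : 2 * m < l)
    (E : Fin (m - 1) → Matrix (Fin l) (Fin l) ℝ)
    (hskew : ∀ α, (E α)ᵀ = -E α)
    (horth : ∀ α, E α * (E α)ᵀ = 1)
    (hE : ∀ α β, E α * E β + E β * E α = if α = β then (-2 : ℝ) • 1 else 0) :
    ∃ z X Y : (Fin l → ℝ) × (Fin l → ℝ),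
      pairDot z z = 1 ∧ (∀ i, pairDot (cliffordP E i z) z = 0) ∧
      pairDot X X = 1 ∧ pairDot Y Y = 1 ∧ pairDot X Y = 0 ∧
      pairDot X z = 0 ∧ pairDot Y z = 0 ∧
      (∀ i, pairDot (cliffordP E i z) X = 0) ∧
      (∀ i, pairDot (cliffordP E i z) Y = 0) ∧
      1 + (∑ α : Fin (m + 1), pairDot (cliffordP E α X) X * pairDot (cliffordP E α Y) Y)
        - (∑ α : Fin (m + 1), (pairDot (cliffordP E α X) Y) ^ 2) = -1 :=
  stmt9_general l m hm hlm E hskew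
end

section
/- Let A₀ = diag(√3, 1/√3, 0, -1/√3, -√3) and let A₁ be the symmetric 5×5 matrix with nonzero entries (A₁)₁₂ = (A₁)₂₁ = -1, (A₁)₂₄ = (A₁)₄₂ = 2/√3, (A₁)₄₅ = (A₁)₅₄ = -1. Then for X = Σᵢ aᵢeᵢ ∈ ℝ⁵, 4|X|² - |A₀X|² - |A₁X|² = (4/3)a₂² + 4a₃² + (4/3)a₄² + (4/√3)a₁a₄ + (4/√3)a₂a₅, and this quadratic form takes a negative value at some unit vector (e.g., a₁ = -√2/2, a₄ = √2/2, others 0, giving 2/3 - 2/√3 < 0). -/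
open Matrix

noncomputable def A₀ : Matrix (Fin 5) (Fin 5) ℝ :=
  Matrix.diagonal ![Real.sqrt 3, 1 / Real.sqrt 3, 0, -(1 / Real.sqrt 3), -Real.sqrt 3]

noncomputable def A₁ : Matrix (Fin 5) (Fin 5) ℝ :=
  !![0, -1, 0, 0, 0;
     -1, 0, 0, 2 / Real.sqrt 3, 0;
     0, 0, 0, 0, 0;
     0, 2 / Real.sqrt 3, 0, 0, -1;
     0, 0, 0, -1, 0]

theorem stmt12 :
    (∀ a : Fin 5 → ℝ,
        4 * (a ⬝ᵥ a) - (A₀.mulVec a ⬝ᵥ A₀.mulVec a) - (A₁.mulVec a ⬝ᵥ A₁.mulVec a)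
          = (4 / 3) * a 1 ^ 2 + 4 * a 2 ^ 2 + (4 / 3) * a 3 ^ 2
            + (4 / Real.sqrt 3) * a 0 * a 3 + (4 / Real.sqrt 3) * a 1 * a 4) ∧
      (∃ a : Fin 5 → ℝ, a ⬝ᵥ a = 1 ∧
        (4 / 3) * a 1 ^ 2 + 4 * a 2 ^ 2 + (4 / 3) * a 3 ^ 2
          + (4 / Real.sqrt 3) * a 0 * a 3 + (4 / Real.sqrt 3) * a 1 * a 4 < 0) := by
  constructor
  · intro a
    simp [A₀, A₁, Matrix.mulVec, dotProduct, Fin.sum_univ_five,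
      Matrix.cons_val_zero, Matrix.cons_val_one, Matrix.head_cons, Matrix.cons_val_two,
      Matrix.tail_cons, Matrix.cons_val_three, Matrix.cons_val_four, Matrix.diagonal_apply,
      Fin.isValue, Matrix.cons_val', Matrix.empty_val', Matrix.cons_val_fin_one,
      Matrix.vecHead, Matrix.vecTail]
    have h3pos : (0:ℝ) < Real.sqrt 3 := Real.sqrt_pos.mpr (by norm_num)
    have hmul : Real.sqrt 3 * Real.sqrt 3 = 3 := Real.mul_self_sqrt (by norm_num)
    have hs1 : (Real.sqrt 3)⁻¹ = Real.sqrt 3 / 3 := by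
      rw [eq_div_iff (by norm_num : (3:ℝ) ≠ 0), inv_mul_eq_div]
      rw [div_eq_iff h3pos.ne']; linarith [hmul]
    have hs2 : (2:ℝ) / Real.sqrt 3 = 2 * Real.sqrt 3 / 3 := by
      rw [div_eq_div_iff h3pos.ne' (by norm_num : (3:ℝ) ≠ 0)]; linarith [hmul]
    have hs4 : (4:ℝ) / Real.sqrt 3 = 4 * Real.sqrt 3 / 3 := by
      rw [div_eq_div_iff h3pos.ne' (by norm_num : (3:ℝ) ≠ 0)]; linarith [hmul]
    rw [hs1, hs2, hs4]
    linear_combination (-(a 0)^2 - 5*(a 1)^2/9 - 5*(a 3)^2/9 - (a 4)^2) * hmul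
  · have h2 : Real.sqrt 2 * Real.sqrt 2 = 2 := Real.mul_self_sqrt (by norm_num)
    have h3pos : (0:ℝ) < Real.sqrt 3 := Real.sqrt_pos.mpr (by norm_num)
    have hmul : Real.sqrt 3 * Real.sqrt 3 = 3 := Real.mul_self_sqrt (by norm_num)
    refine ⟨![-(Real.sqrt 2 / 2), 0, 0, Real.sqrt 2 / 2, 0], ?_, ?_⟩
    · simp [dotProduct, Fin.sum_univ_five, Matrix.cons_val_zero, Matrix.cons_val_one,
        Matrix.head_cons, Matrix.cons_val_two, Matrix.tail_cons, Matrix.cons_val_three,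
        Matrix.cons_val_four]
      nlinarith [h2]
    · simp only [Matrix.cons_val_zero, Matrix.cons_val_one, Matrix.head_cons,
        Matrix.cons_val_two, Matrix.tail_cons, Matrix.cons_val_three, Matrix.cons_val_four]
      have hs4 : (4:ℝ) / Real.sqrt 3 = 4 * Real.sqrt 3 / 3 := by
        rw [div_eq_div_iff h3pos.ne' (by norm_num : (3:ℝ) ≠ 0)]; linarith [hmul]
      have h31 : (1:ℝ) < Real.sqrt 3 := by nlinarith [hmul, h3pos]
      rw [hs4]
      ring_nf
      nlinarith [h2, h31]
end

section
/- Let s₀,...,s₅ be the quadratic forms on ℝ¹³ (coordinates y₁₂, x₁₃, y₁₃, x₁₄, y₁₄, x₁₅, y₁₅, x₂₃, y₂₃, x₂₄, y₂₄, x₂₅, y₂₅) given by: s₀ = -2x₁₄x₂₃ + 2x₁₃x₂₄ + 2y₁₄y₂₃ - 2y₁₃y₂₄, s₃ = -2x₁₄x₂₃ + 2x₁₃y₂₄ - 2y₁₄x₂₃ + 2y₁₃x₂₄ (and s₁, s₂, s₄, s₅ as given similarly), with associated symmetric matrices A₀,...,A₅. For the unit vectors X with x₁₄ = x₂₃ =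 1/√2 (others zero) and Y with x₁₃ = x₂₄ = y₂₄ = 1/√3 (others zero): ⟨A₀X,X⟩ = ⟨A₃X,X⟩ = -1, ⟨A_αX,X⟩ = 0 for α ∉ {0,3}, ⟨A₀Y,Y⟩ = ⟨A₃Y,Y⟩ = 2/3, ⟨A_αY,Y⟩ = 0 for α ∉ {0,3}; hence 1 + Σ_α⟨A_αX,X⟩⟨A_αY,Y⟩ - Σ_α⟨A_αX,Y⟩² ≤ -1/3 < 0. -/
open Matrix

theorem Real.inv_sqrt_mul_inv_sqrt {a : ℝ} (ha : 0 ≤ a) : (√a)⁻¹ * (√a)⁻¹ = a⁻¹ := by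
  rw [← mul_inv, Real.mul_self_sqrt ha]

/- Coordinates on ℝ¹³ in the order
`y₁₂, x₁₃, y₁₃, x₁₄, y₁₄, x₁₅, y₁₅, x₂₃, y₂₃, x₂₄, y₂₄, x₂₅, y₂₅`,
so `v 0 = y₁₂`, `v 1 = x₁₃`, `v 2 = y₁₃`, `v 3 = x₁₄`, `v 4 = y₁₄`, `v 5 = x₁₅`,
`v 6 = y₁₅`, `v 7 = x₂₃`, `v 8 = y₂₃`, `v 9 = x₂₄`, `v 10 = y₂₄`, `v 11 = x₂₅`, `v 12 = y₂₅`. -/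
theorem stmt19_general (A : Fin 6 → Matrix (Fin 13) (Fin 13) ℝ)
    (h0 : ∀ v : Fin 13 → ℝ, (A 0).mulVec v ⬝ᵥ v
      = -2 * v 3 * v 7 + 2 * v 1 * v 9 + 2 * v 4 * v 8 - 2 * v 2 * v 10)
    (h1 : ∀ v : Fin 13 → ℝ, (A 1).mulVec v ⬝ᵥ v
      = -2 * v 5 * v 7 + 2 * v 1 * v 11 + 2 * v 6 * v 8 - 2 * v 2 * v 12)
    (h2 : ∀ v : Fin 13 → ℝ, (A 2).mulVec v ⬝ᵥ v
      = -2 * v 5 * v 9 + 2 * v 3 * v 11 + 2 * v 6 * v 10 - 2 * v 4 * v 12)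
    (h3 : ∀ v : Fin 13 → ℝ, (A 3).mulVec v ⬝ᵥ v
      = -2 * v 3 * v 7 + 2 * v 1 * v 10 - 2 * v 4 * v 7 + 2 * v 2 * v 9)
    (h4 : ∀ v : Fin 13 → ℝ, (A 4).mulVec v ⬝ᵥ v
      = -2 * v 5 * v 8 + 2 * v 1 * v 12 - 2 * v 6 * v 7 + 2 * v 2 * v 11)
    (h5 : ∀ v : Fin 13 → ℝ, (A 5).mulVec v ⬝ᵥ v
      = -2 * v 5 * v 10 + 2 * v 3 * v 12 - 2 * v 6 * v 9 + 2 * v 4 * v 11) :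
    let X : Fin 13 → ℝ :=
      ![0, 0, 0, 1 / Real.sqrt 2, 0, 0, 0, 1 / Real.sqrt 2, 0, 0, 0, 0, 0]
    let Y : Fin 13 → ℝ :=
      ![0, 1 / Real.sqrt 3, 0, 0, 0, 0, 0, 0, 0, 1 / Real.sqrt 3, 1 / Real.sqrt 3, 0, 0]
    X ⬝ᵥ X = 1 ∧ Y ⬝ᵥ Y = 1 ∧
      (A 0).mulVec X ⬝ᵥ X = -1 ∧ (A 3).mulVec X ⬝ᵥ X = -1 ∧
      (∀ α : Fin 6, α ≠ 0 → α ≠ 3 → (A α).mulVec X ⬝ᵥ X = 0) ∧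
      (A 0).mulVec Y ⬝ᵥ Y = 2 / 3 ∧ (A 3).mulVec Y ⬝ᵥ Y = 2 / 3 ∧
      (∀ α : Fin 6, α ≠ 0 → α ≠ 3 → (A α).mulVec Y ⬝ᵥ Y = 0) ∧
      (1 + (∑ α : Fin 6, (A α).mulVec X ⬝ᵥ X * ((A α).mulVec Y ⬝ᵥ Y))
          - (∑ α : Fin 6, ((A α).mulVec X ⬝ᵥ Y) ^ 2) ≤ -(1 / 3) ∧
        -(1 / 3 : ℝ) < 0) := by
  intro X Y
  have hX : ∀ α, (A α).mulVec X ⬝ᵥ X = ![-1, 0, 0, -1, 0, 0] α := by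
    intro α
    fin_cases α <;> simp [X, h0, h1, h2, h3, h4, h5, mul_assoc, Real.inv_sqrt_mul_inv_sqrt]
  have hY : ∀ α, (A α).mulVec Y ⬝ᵥ Y = ![2 / 3, 0, 0, 2 / 3, 0, 0] α := by
    intro α
    fin_cases α <;> simp [Y, h0, h1, h2, h3, h4, h5, mul_assoc, Real.inv_sqrt_mul_inv_sqrt] <;> norm_num
  refine ⟨?_, ?_, hX 0, hX 3, ?_, hY 0, hY 3, ?_, ?_, by norm_num⟩
  · simp [X, dotProduct, Fin.sum_univ_succ, Real.inv_sqrt_mul_inv_sqrt]; norm_num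
  · simp [Y, dotProduct, Fin.sum_univ_succ, Real.inv_sqrt_mul_inv_sqrt]; norm_num
  · intro α hα0 hα3
    rw [hX]
    fin_cases α <;> simp at hα0 hα3 ⊢
  · intro α hα0 hα3
    rw [hY]
    fin_cases α <;> simp at hα0 hα3 ⊢
  · calc _ ≤ 1 + ∑ α : Fin 6, (A α).mulVec X ⬝ᵥ X * ((A α).mulVec Y ⬝ᵥ Y) :=
          sub_le_self _ (Finset.sum_nonneg fun α _ => sq_nonneg _)
      _ = -(1 / 3) := by simp [hX, hY, Fin.sum_univ_succ]; norm_num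

theorem stmt19 (A : Fin 6 → Matrix (Fin 13) (Fin 13) ℝ)
    (hsymm : ∀ α, (A α)ᵀ = A α)
    (h0 : ∀ v : Fin 13 → ℝ, (A 0).mulVec v ⬝ᵥ v
      = -2 * v 3 * v 7 + 2 * v 1 * v 9 + 2 * v 4 * v 8 - 2 * v 2 * v 10)
    (h1 : ∀ v : Fin 13 → ℝ, (A 1).mulVec v ⬝ᵥ v
      = -2 * v 5 * v 7 + 2 * v 1 * v 11 + 2 * v 6 * v 8 - 2 * v 2 * v 12)
    (h2 : ∀ v : Fin 13 → ℝ, (A 2).mulVec v ⬝ᵥ v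
      = -2 * v 5 * v 9 + 2 * v 3 * v 11 + 2 * v 6 * v 10 - 2 * v 4 * v 12)
    (h3 : ∀ v : Fin 13 → ℝ, (A 3).mulVec v ⬝ᵥ v
      = -2 * v 3 * v 7 + 2 * v 1 * v 10 - 2 * v 4 * v 7 + 2 * v 2 * v 9)
    (h4 : ∀ v : Fin 13 → ℝ, (A 4).mulVec v ⬝ᵥ v
      = -2 * v 5 * v 8 + 2 * v 1 * v 12 - 2 * v 6 * v 7 + 2 * v 2 * v 11)
    (h5 : ∀ v : Fin 13 → ℝ, (A 5).mulVec v ⬝ᵥ v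
      = -2 * v 5 * v 10 + 2 * v 3 * v 12 - 2 * v 6 * v 9 + 2 * v 4 * v 11) :
    let X : Fin 13 → ℝ :=
      ![0, 0, 0, 1 / Real.sqrt 2, 0, 0, 0, 1 / Real.sqrt 2, 0, 0, 0, 0, 0]
    let Y : Fin 13 → ℝ :=
      ![0, 1 / Real.sqrt 3, 0, 0, 0, 0, 0, 0, 0, 1 / Real.sqrt 3, 1 / Real.sqrt 3, 0, 0]
    X ⬝ᵥ X = 1 ∧ Y ⬝ᵥ Y = 1 ∧
      (A 0).mulVec X ⬝ᵥ X = -1 ∧ (A 3).mulVec X ⬝ᵥ X = -1 ∧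
      (∀ α : Fin 6, α ≠ 0 → α ≠ 3 → (A α).mulVec X ⬝ᵥ X = 0) ∧
      (A 0).mulVec Y ⬝ᵥ Y = 2 / 3 ∧ (A 3).mulVec Y ⬝ᵥ Y = 2 / 3 ∧
      (∀ α : Fin 6, α ≠ 0 → α ≠ 3 → (A α).mulVec Y ⬝ᵥ Y = 0) ∧
      (1 + (∑ α : Fin 6, (A α).mulVec X ⬝ᵥ X * ((A α).mulVec Y ⬝ᵥ Y))
          - (∑ α : Fin 6, ((A α).mulVec X ⬝ᵥ Y) ^ 2) ≤ -(1 / 3) ∧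
        -(1 / 3 : ℝ) < 0) :=
  stmt19_general A h0 h1 h2 h3 h4 h5
end
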